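/- arXiv:quant-ph/0601172 — 7 statements merged into one kernel-verified Lean document; each statement's English description precedes it below -/
import Mathlib

section
/- Let d_A, d_B, d_C be positive integers. Let A₁, A₂ be Hermitian d_A × d_A complex matrices, B₁, B₂ Hermitian d_B × d_B complex matrices, and C₁, C₂ Hermitian d_C × d_C complex matrices, each with operator norm at most 1 (equivalently, spectrum contained in [-1,1]). Let ρ be a density matrix on ℂ^{d_A} ⊗ ℂ^{d_B} ⊗ ℂ^{d_C} (a positive semidefinite matrix of trace 1, indexed by (Fin d_A × Fin d_B × Fin d_C)). Define the CHSH operators B^{AB} = A₁ ⊗ (B₁ + B₂) ⊗ I + A₂ ⊗ (B₁ − B₂) ⊗ I and B^{AC} = A₁ ⊗ I ⊗ (C₁ + C₂) + A₂ ⊗ I ⊗ (C₁ − C₂), using Kronecker products. Then |tr(B^{AB} ρ)| + |tr(B^{AC} ρ)| ≤ 4. -/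
open Matrix Kronecker
open scoped ComplexOrder

section Aux

variable {m n : Type*} [Fintype m] [Fintype n] [DecidableEq m] [DecidableEq n]

/-- Conjugate transpose distributes over Kronecker products (over ℂ). -/
lemma chsh_conjTranspose_kron (A : Matrix m m ℂ) (B : Matrix n n ℂ) :
    (A ⊗ₖ B)ᴴ = Aᴴ ⊗ₖ Bᴴ := by
  ext ⟨i, j⟩ ⟨k, l⟩
  simp [Matrix.conjTranspose_apply, Matrix.kronecker_apply, mul_comm]

/-- Kronecker product of positive semidefinite matrices is positive semidefinite. -/
lemma chsh_psd_kron {A : Matrix m m ℂ} {B : Matrix n n ℂ}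
    (hA : A.PosSemidef) (hB : B.PosSemidef) : (A ⊗ₖ B).PosSemidef := by
  obtain ⟨A', rfl⟩ : ∃ B : Matrix m m ℂ, _ = Bᴴ * B := by
    open scoped MatrixOrder in exact CStarAlgebra.nonneg_iff_eq_star_mul_self.mp hA.nonneg
  obtain ⟨B', rfl⟩ : ∃ B : Matrix n n ℂ, _ = Bᴴ * B := by
    open scoped MatrixOrder in exact CStarAlgebra.nonneg_iff_eq_star_mul_self.mp hB.nonneg
  rw [Matrix.mul_kronecker_mul, ← chsh_conjTranspose_kron]
  exact Matrix.posSemidef_conjTranspose_mul_self _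

lemma chsh_trace_conjTranspose_mul_self_nonneg (N : Matrix n n ℂ) :
    0 ≤ (Nᴴ * N).trace := by
  rw [Matrix.trace]
  apply Finset.sum_nonneg
  intro i _
  rw [Matrix.diag_apply, Matrix.mul_apply]
  apply Finset.sum_nonneg
  intro j _
  simpa [Matrix.conjTranspose_apply] using star_mul_self_nonneg (N j i)

/-- Trace of a product of positive semidefinite matrices is nonnegative. -/
lemma chsh_trace_mul_nonneg {M ρ : Matrix n n ℂ}
    (hM : M.PosSemidef) (hρ : ρ.PosSemidef) : 0 ≤ (M * ρ).trace := by
  obtain ⟨P, rfl⟩ : ∃ B : Matrix n n ℂ, _ = Bᴴ * B := by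
    open scoped MatrixOrder in exact CStarAlgebra.nonneg_iff_eq_star_mul_self.mp hM.nonneg
  obtain ⟨Q, rfl⟩ : ∃ B : Matrix n n ℂ, _ = Bᴴ * B := by
    open scoped MatrixOrder in exact CStarAlgebra.nonneg_iff_eq_star_mul_self.mp hρ.nonneg
  have key : (Pᴴ * P * (Qᴴ * Q)).trace = ((P * Qᴴ)ᴴ * (P * Qᴴ)).trace :=
    calc (Pᴴ * P * (Qᴴ * Q)).trace
        = ((Pᴴ * (P * Qᴴ)) * Q).trace := by simp only [Matrix.mul_assoc]
      _ = (Q * (Pᴴ * (P * Qᴴ))).trace := Matrix.trace_mul_comm _ _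
      _ = ((P * Qᴴ)ᴴ * (P * Qᴴ)).trace := by
          rw [Matrix.conjTranspose_mul, Matrix.conjTranspose_conjTranspose,
            Matrix.mul_assoc]
  rw [key]
  exact chsh_trace_conjTranspose_mul_self_nonneg _

lemma chsh_neg_kron (A : Matrix m m ℂ) (B : Matrix n n ℂ) :
    (-A) ⊗ₖ B = -(A ⊗ₖ B) := by
  ext ⟨i, j⟩ ⟨k, l⟩
  simp [Matrix.kronecker_apply]

lemma chsh_kron_neg (A : Matrix m m ℂ) (B : Matrix n n ℂ) :
    A ⊗ₖ (-B) = -(A ⊗ₖ B) := by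
  ext ⟨i, j⟩ ⟨k, l⟩
  simp [Matrix.kronecker_apply]

end Aux

/-- Master operator inequality: for any observables with spectrum in [-1,1],
the expectation of B_AB + B_AC is at most 4.  Proved via an exact
no-signaling (LP) certificate: 8 - 2(B_AB + B_AC) is a nonnegative
combination of Kronecker products of positive semidefinite matrices. -/
lemma chsh_master
    (dA dB dC : ℕ)
    (A₁ A₂ : Matrix (Fin dA) (Fin dA) ℂ)
    (B₁ B₂ : Matrix (Fin dB) (Fin dB) ℂ)
    (C₁ C₂ : Matrix (Fin dC) (Fin dC) ℂ)
    (hA₁n : (1 - A₁).PosSemidef ∧ (1 + A₁).PosSemidef)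
    (hA₂n : (1 - A₂).PosSemidef ∧ (1 + A₂).PosSemidef)
    (hB₁n : (1 - B₁).PosSemidef ∧ (1 + B₁).PosSemidef)
    (hB₂n : (1 - B₂).PosSemidef ∧ (1 + B₂).PosSemidef)
    (hC₁n : (1 - C₁).PosSemidef ∧ (1 + C₁).PosSemidef)
    (hC₂n : (1 - C₂).PosSemidef ∧ (1 + C₂).PosSemidef)
    (ρ : Matrix (Fin dA × Fin dB × Fin dC) (Fin dA × Fin dB × Fin dC) ℂ)
    (hρ : ρ.PosSemidef) (hρtr : ρ.trace = 1) :
    (((A₁ ⊗ₖ ((B₁ + B₂) ⊗ₖ (1 : Matrix (Fin dC) (Fin dC) ℂ)) +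
       A₂ ⊗ₖ ((B₁ - B₂) ⊗ₖ (1 : Matrix (Fin dC) (Fin dC) ℂ)) +
       A₁ ⊗ₖ ((1 : Matrix (Fin dB) (Fin dB) ℂ) ⊗ₖ (C₁ + C₂)) +
       A₂ ⊗ₖ ((1 : Matrix (Fin dB) (Fin dB) ℂ) ⊗ₖ (C₁ - C₂))) * ρ).trace).re ≤ 4 := by
  set Sm : Matrix (Fin dA × Fin dB × Fin dC) (Fin dA × Fin dB × Fin dC) ℂ :=
    A₁ ⊗ₖ ((B₁ + B₂) ⊗ₖ (1 : Matrix (Fin dC) (Fin dC) ℂ)) +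
    A₂ ⊗ₖ ((B₁ - B₂) ⊗ₖ (1 : Matrix (Fin dC) (Fin dC) ℂ)) +
    A₁ ⊗ₖ ((1 : Matrix (Fin dB) (Fin dB) ℂ) ⊗ₖ (C₁ + C₂)) +
    A₂ ⊗ₖ ((1 : Matrix (Fin dB) (Fin dB) ℂ) ⊗ₖ (C₁ - C₂)) with hSm
  set T₁ := (1 + A₁) ⊗ₖ ((1 - B₁) ⊗ₖ (1 - C₂)) with hT₁
  set T₂ := (1 - A₁) ⊗ₖ ((1 + B₁) ⊗ₖ (1 + C₂)) with hT₂
  set T₃ := (1 + A₁) ⊗ₖ ((1 - B₂) ⊗ₖ (1 - C₁)) with hT₃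
  set T₄ := (1 - A₁) ⊗ₖ ((1 + B₂) ⊗ₖ (1 + C₁)) with hT₄
  set T₅ := (1 + A₂) ⊗ₖ ((1 - B₁) ⊗ₖ (1 + C₂)) with hT₅
  set T₆ := (1 - A₂) ⊗ₖ ((1 + B₁) ⊗ₖ (1 - C₂)) with hT₆
  set T₇ := (1 + A₂) ⊗ₖ ((1 + B₂) ⊗ₖ (1 - C₁)) with hT₇
  set T₈ := (1 - A₂) ⊗ₖ ((1 - B₂) ⊗ₖ (1 + C₁)) with hT₈
  -- the certificate identity
  have hid : T₁ + T₂ + T₃ + T₄ + T₅ + T₆ + T₇ + T₈ + (Sm + Sm) =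
      (8 : ℂ) • ((1 : Matrix (Fin dA) (Fin dA) ℂ) ⊗ₖ
        ((1 : Matrix (Fin dB) (Fin dB) ℂ) ⊗ₖ (1 : Matrix (Fin dC) (Fin dC) ℂ))) := by
    rw [hT₁, hT₂, hT₃, hT₄, hT₅, hT₆, hT₇, hT₈, hSm]
    ext ⟨i, j, k⟩ ⟨i', j', k'⟩
    simp only [Matrix.add_apply, Matrix.sub_apply, Matrix.kronecker_apply,
      Matrix.smul_apply, Matrix.one_apply, smul_eq_mul]
    split_ifs <;> ring
  -- trace of the identity against ρ
  have htr : (T₁ * ρ).trace + (T₂ * ρ).trace + (T₃ * ρ).trace + (T₄ * ρ).trace +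
      (T₅ * ρ).trace + (T₆ * ρ).trace + (T₇ * ρ).trace + (T₈ * ρ).trace +
      ((Sm * ρ).trace + (Sm * ρ).trace) = 8 := by
    have := congrArg (fun M => (M * ρ).trace) hid
    simp only [Matrix.add_mul, Matrix.trace_add, Matrix.smul_mul, Matrix.trace_smul,
      Matrix.one_kronecker_one, Matrix.one_mul, smul_eq_mul, hρtr, mul_one] at this
    linear_combination this
  have h1 : (0 : ℂ) ≤ (T₁ * ρ).trace := chsh_trace_mul_nonneg
    (chsh_psd_kron hA₁n.2 (chsh_psd_kron hB₁n.1 hC₂n.1)) hρ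
  have h2 : (0 : ℂ) ≤ (T₂ * ρ).trace := chsh_trace_mul_nonneg
    (chsh_psd_kron hA₁n.1 (chsh_psd_kron hB₁n.2 hC₂n.2)) hρ
  have h3 : (0 : ℂ) ≤ (T₃ * ρ).trace := chsh_trace_mul_nonneg
    (chsh_psd_kron hA₁n.2 (chsh_psd_kron hB₂n.1 hC₁n.1)) hρ
  have h4 : (0 : ℂ) ≤ (T₄ * ρ).trace := chsh_trace_mul_nonneg
    (chsh_psd_kron hA₁n.1 (chsh_psd_kron hB₂n.2 hC₁n.2)) hρ
  have h5 : (0 : ℂ) ≤ (T₅ * ρ).trace := chsh_trace_mul_nonneg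
    (chsh_psd_kron hA₂n.2 (chsh_psd_kron hB₁n.1 hC₂n.2)) hρ
  have h6 : (0 : ℂ) ≤ (T₆ * ρ).trace := chsh_trace_mul_nonneg
    (chsh_psd_kron hA₂n.1 (chsh_psd_kron hB₁n.2 hC₂n.1)) hρ
  have h7 : (0 : ℂ) ≤ (T₇ * ρ).trace := chsh_trace_mul_nonneg
    (chsh_psd_kron hA₂n.2 (chsh_psd_kron hB₂n.2 hC₁n.1)) hρ
  have h8 : (0 : ℂ) ≤ (T₈ * ρ).trace := chsh_trace_mul_nonneg
    (chsh_psd_kron hA₂n.1 (chsh_psd_kron hB₂n.1 hC₁n.2)) hρ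
  have hre := congrArg Complex.re htr
  simp only [Complex.add_re] at hre
  have r1 := (Complex.nonneg_iff.mp h1).1
  have r2 := (Complex.nonneg_iff.mp h2).1
  have r3 := (Complex.nonneg_iff.mp h3).1
  have r4 := (Complex.nonneg_iff.mp h4).1
  have r5 := (Complex.nonneg_iff.mp h5).1
  have r6 := (Complex.nonneg_iff.mp h6).1
  have r7 := (Complex.nonneg_iff.mp h7).1
  have r8 := (Complex.nonneg_iff.mp h8).1
  have h8re : ((8 : ℂ)).re = 8 := by norm_num
  rw [h8re] at hre
  linarith

set_option maxHeartbeats 1000000 in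
/-- **Theorem 1 (monogamy of CHSH correlations).**
If three parties A, B, C share a quantum state ρ of arbitrary finite dimension
and each measures one of two ±1-bounded Hermitian observables (A's observables
being the same in both CHSH operators), then
|tr(B_CHSH^{AB} ρ)| + |tr(B_CHSH^{AC} ρ)| ≤ 4. -/
theorem chsh_monogamy
    (dA dB dC : ℕ) (hdA : 0 < dA) (hdB : 0 < dB) (hdC : 0 < dC)
    (A₁ A₂ : Matrix (Fin dA) (Fin dA) ℂ)
    (B₁ B₂ : Matrix (Fin dB) (Fin dB) ℂ)
    (C₁ C₂ : Matrix (Fin dC) (Fin dC) ℂ)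
    (hA₁ : A₁.IsHermitian) (hA₂ : A₂.IsHermitian)
    (hB₁ : B₁.IsHermitian) (hB₂ : B₂.IsHermitian)
    (hC₁ : C₁.IsHermitian) (hC₂ : C₂.IsHermitian)
    (hA₁n : (1 - A₁).PosSemidef ∧ (1 + A₁).PosSemidef)
    (hA₂n : (1 - A₂).PosSemidef ∧ (1 + A₂).PosSemidef)
    (hB₁n : (1 - B₁).PosSemidef ∧ (1 + B₁).PosSemidef)
    (hB₂n : (1 - B₂).PosSemidef ∧ (1 + B₂).PosSemidef)
    (hC₁n : (1 - C₁).PosSemidef ∧ (1 + C₁).PosSemidef)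
    (hC₂n : (1 - C₂).PosSemidef ∧ (1 + C₂).PosSemidef)
    (ρ : Matrix (Fin dA × Fin dB × Fin dC) (Fin dA × Fin dB × Fin dC) ℂ)
    (hρ : ρ.PosSemidef) (hρtr : ρ.trace = 1) :
    ‖((A₁ ⊗ₖ ((B₁ + B₂) ⊗ₖ (1 : Matrix (Fin dC) (Fin dC) ℂ)) +
        A₂ ⊗ₖ ((B₁ - B₂) ⊗ₖ (1 : Matrix (Fin dC) (Fin dC) ℂ))) * ρ).trace‖ +
      ‖((A₁ ⊗ₖ ((1 : Matrix (Fin dB) (Fin dB) ℂ) ⊗ₖ (C₁ + C₂)) +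
        A₂ ⊗ₖ ((1 : Matrix (Fin dB) (Fin dB) ℂ) ⊗ₖ (C₁ - C₂))) * ρ).trace‖ ≤ 4 := by
  set X : Matrix (Fin dA × Fin dB × Fin dC) (Fin dA × Fin dB × Fin dC) ℂ :=
    A₁ ⊗ₖ ((B₁ + B₂) ⊗ₖ (1 : Matrix (Fin dC) (Fin dC) ℂ)) +
    A₂ ⊗ₖ ((B₁ - B₂) ⊗ₖ (1 : Matrix (Fin dC) (Fin dC) ℂ)) with hX
  set Y : Matrix (Fin dA × Fin dB × Fin dC) (Fin dA × Fin dB × Fin dC) ℂ :=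
    A₁ ⊗ₖ ((1 : Matrix (Fin dB) (Fin dB) ℂ) ⊗ₖ (C₁ + C₂)) +
    A₂ ⊗ₖ ((1 : Matrix (Fin dB) (Fin dB) ℂ) ⊗ₖ (C₁ - C₂)) with hY
  -- Hermitian-ness of X and Y
  have hXh : Xᴴ = X := by
    rw [hX]
    simp only [Matrix.conjTranspose_add, chsh_conjTranspose_kron,
      Matrix.conjTranspose_sub, Matrix.conjTranspose_one,
      hA₁.eq, hA₂.eq, hB₁.eq, hB₂.eq, hC₁.eq, hC₂.eq]
  have hYh : Yᴴ = Y := by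
    rw [hY]
    simp only [Matrix.conjTranspose_add, chsh_conjTranspose_kron,
      Matrix.conjTranspose_sub, Matrix.conjTranspose_one,
      hA₁.eq, hA₂.eq, hB₁.eq, hB₂.eq, hC₁.eq, hC₂.eq]
  -- the traces are real
  have hreal : ∀ (M : Matrix (Fin dA × Fin dB × Fin dC) (Fin dA × Fin dB × Fin dC) ℂ),
      Mᴴ = M → ((M * ρ).trace) = (((M * ρ).trace.re : ℝ) : ℂ) := by
    intro M hM
    have h1 : (starRingEnd ℂ) ((M * ρ).trace) = (M * ρ).trace := by
      have : ((M * ρ)ᴴ).trace = star ((M * ρ).trace) := Matrix.trace_conjTranspose _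
      rw [Matrix.conjTranspose_mul, hM, hρ.1.eq] at this
      rw [Matrix.trace_mul_comm] at this
      exact this.symm
    have him : ((M * ρ).trace).im = 0 := Complex.conj_eq_iff_im.mp h1
    exact (Complex.re_add_im _).symm.trans (by rw [him]; simp)
  have hXr := hreal X hXh
  have hYr := hreal Y hYh
  rw [hXr, hYr, Complex.norm_real, Complex.norm_real, Real.norm_eq_abs, Real.norm_eq_abs]
  -- expectation values as real numbers
  set x : ℝ := (X * ρ).trace.re with hx
  set y : ℝ := (Y * ρ).trace.re with hy
  -- four applications of the master lemma, one per sign pattern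
  have hPP : x + y ≤ 4 := by
    have h := chsh_master dA dB dC A₁ A₂ B₁ B₂ C₁ C₂
      hA₁n hA₂n hB₁n hB₂n hC₁n hC₂n ρ hρ hρtr
    have e : (A₁ ⊗ₖ ((B₁ + B₂) ⊗ₖ (1 : Matrix (Fin dC) (Fin dC) ℂ)) +
       A₂ ⊗ₖ ((B₁ - B₂) ⊗ₖ (1 : Matrix (Fin dC) (Fin dC) ℂ)) +
       A₁ ⊗ₖ ((1 : Matrix (Fin dB) (Fin dB) ℂ) ⊗ₖ (C₁ + C₂)) +
       A₂ ⊗ₖ ((1 : Matrix (Fin dB) (Fin dB) ℂ) ⊗ₖ (C₁ - C₂))) = X + Y := by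
      rw [hX, hY]; abel
    rw [e, Matrix.add_mul, Matrix.trace_add, Complex.add_re] at h
    exact h
  have hMP : -x + y ≤ 4 := by
    have h := chsh_master dA dB dC A₁ A₂ (-B₁) (-B₂) C₁ C₂
      hA₁n hA₂n
      ⟨by rw [sub_neg_eq_add]; exact (by assumption : _ ∧ _).2, by rw [← sub_eq_add_neg]; exact (by assumption : _ ∧ _).1⟩
      ⟨by rw [sub_neg_eq_add]; exact (by assumption : _ ∧ _).2, by rw [← sub_eq_add_neg]; exact (by assumption : _ ∧ _).1⟩
      hC₁n hC₂n ρ hρ hρtr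
    have e : (A₁ ⊗ₖ (((-B₁) + (-B₂)) ⊗ₖ (1 : Matrix (Fin dC) (Fin dC) ℂ)) +
       A₂ ⊗ₖ (((-B₁) - (-B₂)) ⊗ₖ (1 : Matrix (Fin dC) (Fin dC) ℂ)) +
       A₁ ⊗ₖ ((1 : Matrix (Fin dB) (Fin dB) ℂ) ⊗ₖ (C₁ + C₂)) +
       A₂ ⊗ₖ ((1 : Matrix (Fin dB) (Fin dB) ℂ) ⊗ₖ (C₁ - C₂))) = -X + Y := by
      simp only [show (-B₁ + -B₂ : Matrix (Fin dB) (Fin dB) ℂ) = -(B₁ + B₂) from by abel,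
        show (-B₁ - -B₂ : Matrix (Fin dB) (Fin dB) ℂ) = -(B₁ - B₂) from by abel,
        chsh_neg_kron, chsh_kron_neg, hX, hY]
      abel
    rw [e] at h
    simp only [Matrix.add_mul, Matrix.neg_mul, Matrix.trace_add, Matrix.trace_neg,
      Complex.add_re, Complex.neg_re] at h
    linarith
  have hPM : x + -y ≤ 4 := by
    have h := chsh_master dA dB dC A₁ A₂ B₁ B₂ (-C₁) (-C₂)
      hA₁n hA₂n hB₁n hB₂n
      ⟨by rw [sub_neg_eq_add]; exact (by assumption : _ ∧ _).2, by rw [← sub_eq_add_neg]; exact (by assumption : _ ∧ _).1⟩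
      ⟨by rw [sub_neg_eq_add]; exact (by assumption : _ ∧ _).2, by rw [← sub_eq_add_neg]; exact (by assumption : _ ∧ _).1⟩
      ρ hρ hρtr
    have e : (A₁ ⊗ₖ ((B₁ + B₂) ⊗ₖ (1 : Matrix (Fin dC) (Fin dC) ℂ)) +
       A₂ ⊗ₖ ((B₁ - B₂) ⊗ₖ (1 : Matrix (Fin dC) (Fin dC) ℂ)) +
       A₁ ⊗ₖ ((1 : Matrix (Fin dB) (Fin dB) ℂ) ⊗ₖ ((-C₁) + (-C₂))) +
       A₂ ⊗ₖ ((1 : Matrix (Fin dB) (Fin dB) ℂ) ⊗ₖ ((-C₁) - (-C₂)))) = X + -Y := by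
      simp only [show (-C₁ + -C₂ : Matrix (Fin dC) (Fin dC) ℂ) = -(C₁ + C₂) from by abel,
        show (-C₁ - -C₂ : Matrix (Fin dC) (Fin dC) ℂ) = -(C₁ - C₂) from by abel,
        chsh_neg_kron, chsh_kron_neg, hX, hY]
      abel
    rw [e] at h
    simp only [Matrix.add_mul, Matrix.neg_mul, Matrix.trace_add, Matrix.trace_neg,
      Complex.add_re, Complex.neg_re] at h
    linarith
  have hMM : -x + -y ≤ 4 := by
    have h := chsh_master dA dB dC A₁ A₂ (-B₁) (-B₂) (-C₁) (-C₂)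
      hA₁n hA₂n
      ⟨by rw [sub_neg_eq_add]; exact (by assumption : _ ∧ _).2, by rw [← sub_eq_add_neg]; exact (by assumption : _ ∧ _).1⟩
      ⟨by rw [sub_neg_eq_add]; exact (by assumption : _ ∧ _).2, by rw [← sub_eq_add_neg]; exact (by assumption : _ ∧ _).1⟩
      ⟨by rw [sub_neg_eq_add]; exact (by assumption : _ ∧ _).2, by rw [← sub_eq_add_neg]; exact (by assumption : _ ∧ _).1⟩
      ⟨by rw [sub_neg_eq_add]; exact (by assumption : _ ∧ _).2, by rw [← sub_eq_add_neg]; exact (by assumption : _ ∧ _).1⟩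
      ρ hρ hρtr
    have e : (A₁ ⊗ₖ (((-B₁) + (-B₂)) ⊗ₖ (1 : Matrix (Fin dC) (Fin dC) ℂ)) +
       A₂ ⊗ₖ (((-B₁) - (-B₂)) ⊗ₖ (1 : Matrix (Fin dC) (Fin dC) ℂ)) +
       A₁ ⊗ₖ ((1 : Matrix (Fin dB) (Fin dB) ℂ) ⊗ₖ ((-C₁) + (-C₂))) +
       A₂ ⊗ₖ ((1 : Matrix (Fin dB) (Fin dB) ℂ) ⊗ₖ ((-C₁) - (-C₂)))) = -X + -Y := by
      simp only [show (-B₁ + -B₂ : Matrix (Fin dB) (Fin dB) ℂ) = -(B₁ + B₂) from by abel,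
        show (-B₁ - -B₂ : Matrix (Fin dB) (Fin dB) ℂ) = -(B₁ - B₂) from by abel,
        show (-C₁ + -C₂ : Matrix (Fin dC) (Fin dC) ℂ) = -(C₁ + C₂) from by abel,
        show (-C₁ - -C₂ : Matrix (Fin dC) (Fin dC) ℂ) = -(C₁ - C₂) from by abel,
        chsh_neg_kron, chsh_kron_neg, hX, hY]
      abel
    rw [e] at h
    simp only [Matrix.add_mul, Matrix.neg_mul, Matrix.trace_add, Matrix.trace_neg,
      Complex.add_re, Complex.neg_re] at h
    linarith
  rcases abs_cases x with ⟨ex, _⟩ | ⟨ex, _⟩ <;>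
    rcases abs_cases y with ⟨ey, _⟩ | ⟨ey, _⟩ <;>
      rw [ex, ey] <;> linarith
end

section
/- Let p : Fin 2 → Fin 2 → Fin 2 → Fin 2 → Fin 2 → Fin 2 → ℝ, written p a b c x y z, be a tripartite no-signaling probability distribution with binary inputs and outputs: (i) p a b c x y z ≥ 0 for all a,b,c,x,y,z; (ii) Σ_{a,b,c} p a b c x y z = 1 for all x,y,z; (iii) Σ_a p a b c x y z is independent of x, Σ_b p a b c x y z is independent of y, and Σ_c p a b c x y z is independent of z. Define the CHSH value between A and B as S_AB = Σ_{x,y ∈ Fin 2} (−1)^{x·y} Σ_{a,b,c} (−1)^{a+b} p a b c x y 0, and between A and C as S_AC = Σ_{x,z ∈ Fin 2} (−1)^{x·z} Σ_{a,b,c} (−1)^{a+c} p a b c x 0 z. Then |S_AB| + |S_AC| ≤ 4. -/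
open Finset

private def Mab (p : Fin 2 → Fin 2 → Fin 2 → Fin 2 → Fin 2 → Fin 2 → ℝ) (x y z : Fin 2) : ℝ :=
  ∑ a : Fin 2, ∑ b : Fin 2, ∑ c : Fin 2, (-1 : ℝ) ^ ((a : ℕ) + (b : ℕ)) * p a b c x y z

private def Nac (p : Fin 2 → Fin 2 → Fin 2 → Fin 2 → Fin 2 → Fin 2 → ℝ) (x y z : Fin 2) : ℝ :=
  ∑ a : Fin 2, ∑ b : Fin 2, ∑ c : Fin 2, (-1 : ℝ) ^ ((a : ℕ) + (c : ℕ)) * p a b c x y z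

private def Kbc (p : Fin 2 → Fin 2 → Fin 2 → Fin 2 → Fin 2 → Fin 2 → ℝ) (x y z : Fin 2) : ℝ :=
  ∑ a : Fin 2, ∑ b : Fin 2, ∑ c : Fin 2, (-1 : ℝ) ^ ((b : ℕ) + (c : ℕ)) * p a b c x y z

private lemma ptwise (p : Fin 2 → Fin 2 → Fin 2 → Fin 2 → Fin 2 → Fin 2 → ℝ)
    (hpos : ∀ a b c x y z, 0 ≤ p a b c x y z)
    (hnorm : ∀ x y z, ∑ a, ∑ b, ∑ c, p a b c x y z = 1)
    (x y z : Fin 2) (s t : ℝ) (hs : s = 1 ∨ s = -1) (ht : t = 1 ∨ t = -1) :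
    s * Mab p x y z + t * Nac p x y z ≤ 1 + s * t * Kbc p x y z := by
  have h1 := hnorm x y z
  have h := fun a b c => hpos a b c x y z
  rcases hs with rfl | rfl <;> rcases ht with rfl | rfl <;>
  · simp [Mab, Nac, Kbc, Fin.sum_univ_two] at h1 ⊢
    linarith [h 0 0 0, h 0 0 1, h 0 1 0, h 0 1 1, h 1 0 0, h 1 0 1, h 1 1 0, h 1 1 1]

/-- **Theorem 1, no-signaling form.** For any tripartite no-signaling probability
distribution with binary inputs and outputs, the CHSH values between A,B and
between A,C satisfy |S_AB| + |S_AC| ≤ 4. -/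
theorem chsh_monogamy_ns
    (p : Fin 2 → Fin 2 → Fin 2 → Fin 2 → Fin 2 → Fin 2 → ℝ)
    (hpos : ∀ a b c x y z, 0 ≤ p a b c x y z)
    (hnorm : ∀ x y z, ∑ a, ∑ b, ∑ c, p a b c x y z = 1)
    (hnsA : ∀ b c x x' y z, ∑ a, p a b c x y z = ∑ a, p a b c x' y z)
    (hnsB : ∀ a c x y y' z, ∑ b, p a b c x y z = ∑ b, p a b c x y' z)
    (hnsC : ∀ a b x y z z', ∑ c, p a b c x y z = ∑ c, p a b c x y z') :
    |∑ x : Fin 2, ∑ y : Fin 2, (-1 : ℝ) ^ ((x : ℕ) * (y : ℕ)) *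
        ∑ a : Fin 2, ∑ b : Fin 2, ∑ c : Fin 2, (-1 : ℝ) ^ ((a : ℕ) + (b : ℕ)) * p a b c x y 0| +
      |∑ x : Fin 2, ∑ z : Fin 2, (-1 : ℝ) ^ ((x : ℕ) * (z : ℕ)) *
        ∑ a : Fin 2, ∑ b : Fin 2, ∑ c : Fin 2, (-1 : ℝ) ^ ((a : ℕ) + (c : ℕ)) * p a b c x 0 z| ≤ 4 := by
  -- M is independent of z
  have hM : ∀ x y z z', Mab p x y z = Mab p x y z' := by
    intro x y z z'
    have h00 := hnsC 0 0 x y z z'; have h01 := hnsC 0 1 x y z z'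
    have h10 := hnsC 1 0 x y z z'; have h11 := hnsC 1 1 x y z z'
    simp [Fin.sum_univ_two] at h00 h01 h10 h11
    simp [Mab, Fin.sum_univ_two]
    linarith
  have hN : ∀ x y y' z, Nac p x y z = Nac p x y' z := by
    intro x y y' z
    have h00 := hnsB 0 0 x y y' z; have h01 := hnsB 0 1 x y y' z
    have h10 := hnsB 1 0 x y y' z; have h11 := hnsB 1 1 x y y' z
    simp [Fin.sum_univ_two] at h00 h01 h10 h11
    simp [Nac, Fin.sum_univ_two]
    linarith
  have hK : ∀ x x' y z, Kbc p x y z = Kbc p x' y z := by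
    intro x x' y z
    have h00 := hnsA 0 0 x x' y z; have h01 := hnsA 0 1 x x' y z
    have h10 := hnsA 1 0 x x' y z; have h11 := hnsA 1 1 x x' y z
    simp [Fin.sum_univ_two] at h00 h01 h10 h11
    simp [Kbc, Fin.sum_univ_two]
    linarith
  have hSAB : (∑ x : Fin 2, ∑ y : Fin 2, (-1 : ℝ) ^ ((x : ℕ) * (y : ℕ)) *
        ∑ a : Fin 2, ∑ b : Fin 2, ∑ c : Fin 2, (-1 : ℝ) ^ ((a : ℕ) + (b : ℕ)) * p a b c x y 0)
      = Mab p 0 0 0 + Mab p 0 1 0 + Mab p 1 0 0 - Mab p 1 1 0 := by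
    simp [Mab, Fin.sum_univ_two]; ring
  have hSAC : (∑ x : Fin 2, ∑ z : Fin 2, (-1 : ℝ) ^ ((x : ℕ) * (z : ℕ)) *
        ∑ a : Fin 2, ∑ b : Fin 2, ∑ c : Fin 2, (-1 : ℝ) ^ ((a : ℕ) + (c : ℕ)) * p a b c x 0 z)
      = Nac p 0 0 0 + Nac p 0 0 1 + Nac p 1 0 0 - Nac p 1 0 1 := by
    simp [Nac, Fin.sum_univ_two]; ring
  rw [hSAB, hSAC]
  have key : ∀ s t : ℝ, s = 1 ∨ s = -1 → t = 1 ∨ t = -1 →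
      s * (Mab p 0 0 0 + Mab p 0 1 0 + Mab p 1 0 0 - Mab p 1 1 0)
      + t * (Nac p 0 0 0 + Nac p 0 0 1 + Nac p 1 0 0 - Nac p 1 0 1) ≤ 4 := by
    intro s t hs ht
    have e1 : Mab p 0 0 0 = Mab p 0 0 1 := hM 0 0 0 1
    have e2 : Mab p 1 0 0 = Mab p 1 0 1 := hM 1 0 0 1
    have e3 : Nac p 0 0 0 = Nac p 0 1 0 := hN 0 0 1 0
    have e4 : Nac p 1 0 0 = Nac p 1 1 0 := hN 1 0 1 0
    have k1 : Kbc p 0 0 1 = Kbc p 1 0 1 := hK 0 1 0 1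
    have k2 : Kbc p 0 1 0 = Kbc p 1 1 0 := hK 0 1 1 0
    rcases hs with rfl | rfl <;> rcases ht with rfl | rfl <;>
      [ (have i1 := ptwise p hpos hnorm 0 0 1 1 1 (by norm_num) (by norm_num)
         have i2 := ptwise p hpos hnorm 0 1 0 1 1 (by norm_num) (by norm_num)
         have i3 := ptwise p hpos hnorm 1 0 1 1 (-1) (by norm_num) (by norm_num)
         have i4 := ptwise p hpos hnorm 1 1 0 (-1) 1 (by norm_num) (by norm_num)
         linarith);
        (have i1 := ptwise p hpos hnorm 0 0 1 1 (-1) (by norm_num) (by norm_num)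
         have i2 := ptwise p hpos hnorm 0 1 0 1 (-1) (by norm_num) (by norm_num)
         have i3 := ptwise p hpos hnorm 1 0 1 1 1 (by norm_num) (by norm_num)
         have i4 := ptwise p hpos hnorm 1 1 0 (-1) (-1) (by norm_num) (by norm_num)
         linarith);
        (have i1 := ptwise p hpos hnorm 0 0 1 (-1) 1 (by norm_num) (by norm_num)
         have i2 := ptwise p hpos hnorm 0 1 0 (-1) 1 (by norm_num) (by norm_num)
         have i3 := ptwise p hpos hnorm 1 0 1 (-1) (-1) (by norm_num) (by norm_num)
         have i4 := ptwise p hpos hnorm 1 1 0 1 1 (by norm_num) (by norm_num)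
         linarith);
        (have i1 := ptwise p hpos hnorm 0 0 1 (-1) (-1) (by norm_num) (by norm_num)
         have i2 := ptwise p hpos hnorm 0 1 0 (-1) (-1) (by norm_num) (by norm_num)
         have i3 := ptwise p hpos hnorm 1 0 1 (-1) 1 (by norm_num) (by norm_num)
         have i4 := ptwise p hpos hnorm 1 1 0 1 (-1) (by norm_num) (by norm_num)
         linarith)]
  rcases abs_cases (Mab p 0 0 0 + Mab p 0 1 0 + Mab p 1 0 0 - Mab p 1 1 0) with ⟨h1, _⟩ | ⟨h1, _⟩ <;>
    rcases abs_cases (Nac p 0 0 0 + Nac p 0 0 1 + Nac p 1 0 0 - Nac p 1 0 1) with ⟨h2, _⟩ | ⟨h2, _⟩ <;>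
    rw [h1, h2]
  · linarith [key 1 1 (Or.inl rfl) (Or.inl rfl)]
  · linarith [key 1 (-1) (Or.inl rfl) (Or.inr rfl)]
  · linarith [key (-1) 1 (Or.inr rfl) (Or.inl rfl)]
  · linarith [key (-1) (-1) (Or.inr rfl) (Or.inr rfl)]
end

section
/- In the three-player CHSH game G'_CHSH, every deterministic classical strategy, given by functions f, g, h : Fin 2 → Fin 2 for the three players, wins with probability at most 3/4, and there exists a deterministic strategy (e.g. all players always answer 0) that wins with probability exactly 3/4. Here the winning probability of the strategy (f,g,h) is (1/8) Σ_{x,y,z ∈ Fin 2} ( (1/2)·[f(x) + g(y) = x·y (mod 2)] + (1/2)·[f(x) + h(z) = x·z (mod 2)] ), where [φ] is 1 if φ holds and 0 otherwise. Hence the classical value ω_c(G'_CHSH) = 3/4. -/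
open Finset

/-- The winning probability of the deterministic strategy `(f, g, h)` in the
three-player CHSH game `G'_CHSH`: the referee sends uniform random bits `x, y, z`
to the players; with probability 1/2 he checks `f x ⊕ g y = x ∧ y`, and with
probability 1/2 he checks `f x ⊕ h z = x ∧ z`. (Arithmetic in `Fin 2` is mod 2.) -/
noncomputable def chsh3WinProb (f g h : Fin 2 → Fin 2) : ℝ :=
  (1 / 8 : ℝ) * ∑ x : Fin 2, ∑ y : Fin 2, ∑ z : Fin 2,
    ((1 / 2 : ℝ) * (if f x + g y = x * y then 1 else 0) +
      (1 / 2 : ℝ) * (if f x + h z = x * z then 1 else 0))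

lemma fin2cases (a : Fin 2) : a = 0 ∨ a = 1 := by omega

/-- **Classical value of the three-player CHSH game.** Every deterministic
strategy wins with probability at most 3/4, and some deterministic strategy
wins with probability exactly 3/4; hence `ω_c(G'_CHSH) = 3/4`. -/
theorem chsh3_classical_value :
    (∀ f g h : Fin 2 → Fin 2, chsh3WinProb f g h ≤ 3 / 4) ∧
      (∃ f g h : Fin 2 → Fin 2, chsh3WinProb f g h = 3 / 4) := by
  constructor
  · intro f g h
    unfold chsh3WinProb
    simp only [Fin.sum_univ_two]
    rcases fin2cases (f 0) with h0 | h0 <;> rcases fin2cases (f 1) with h1 | h1 <;>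
      rcases fin2cases (g 0) with h2 | h2 <;> rcases fin2cases (g 1) with h3 | h3 <;>
      rcases fin2cases (h 0) with h4 | h4 <;> rcases fin2cases (h 1) with h5 | h5 <;>
      simp [h0, h1, h2, h3, h4, h5] <;> norm_num
  · exact ⟨fun _ => 0, fun _ => 0, fun _ => 0, by
      unfold chsh3WinProb; simp [Fin.sum_univ_two]; norm_num⟩
end

section
/- For every pair of real numbers (s, t) with |s| + |t| ≤ 4, there exists a tripartite no-signaling probability distribution p with binary inputs and binary outputs (i.e., p a b c x y z ≥ 0, Σ_{a,b,c} p a b c x y z = 1 for all inputs, and the single-party marginals Σ_a p, Σ_b p, Σ_c p are independent of x, y, z respectively) whose CHSH values satisfy S_AB = s and S_AC = t, where S_AB = Σ_{x,y ∈ Fin 2} (−1)^{x·y} Σ_{a,b,c} (−1)^{a+b} p a b c x y 0 and S_AC = Σ_{x,z ∈ Fin 2} (−1)^{x·z} Σ_{a,b,c} (−1)^{a+c} p a b c x 0 z. -/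
set_option maxHeartbeats 1000000

open Finset

lemma chsh_aux_pm (m : ℕ) : (-1 : ℝ) ^ m = 1 ∨ (-1 : ℝ) ^ m = -1 := by
  rcases Nat.even_or_odd m with h | h
  · left; exact h.neg_one_pow
  · right; exact h.neg_one_pow

lemma chsh_aux_nonneg (s t : ℝ) (hst : |s| + |t| ≤ 4) (m n : ℕ) :
    0 ≤ (1 + (s / 4) * (-1 : ℝ) ^ m + (t / 4) * (-1 : ℝ) ^ n) / 8 := by
  rcases chsh_aux_pm m with hm | hm <;> rcases chsh_aux_pm n with hn | hn <;>
    rw [hm, hn] <;> rcases abs_cases s with ⟨hs, _⟩ | ⟨hs, _⟩ <;>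
    rcases abs_cases t with ⟨ht, _⟩ | ⟨ht, _⟩ <;> nlinarith

/-- **Converse of Theorem 1 for no-signaling correlations.** Every pair `(s, t)`
with `|s| + |t| ≤ 4` is realized as the pair of CHSH values `(S_AB, S_AC)` of
some tripartite no-signaling distribution with binary inputs and outputs. -/
theorem chsh_monogamy_converse (s t : ℝ) (hst : |s| + |t| ≤ 4) :
    ∃ p : Fin 2 → Fin 2 → Fin 2 → Fin 2 → Fin 2 → Fin 2 → ℝ,
      (∀ a b c x y z, 0 ≤ p a b c x y z) ∧
      (∀ x y z : Fin 2, ∑ a : Fin 2, ∑ b : Fin 2, ∑ c : Fin 2, p a b c x y z = 1) ∧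
      (∀ b c x x' y z, ∑ a : Fin 2, p a b c x y z = ∑ a : Fin 2, p a b c x' y z) ∧
      (∀ a c x y y' z, ∑ b : Fin 2, p a b c x y z = ∑ b : Fin 2, p a b c x y' z) ∧
      (∀ a b x y z z', ∑ c : Fin 2, p a b c x y z = ∑ c : Fin 2, p a b c x y z') ∧
      (∑ x : Fin 2, ∑ y : Fin 2, (-1 : ℝ) ^ ((x : ℕ) * (y : ℕ)) *
          ∑ a : Fin 2, ∑ b : Fin 2, ∑ c : Fin 2,
            (-1 : ℝ) ^ ((a : ℕ) + (b : ℕ)) * p a b c x y 0) = s ∧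
      (∑ x : Fin 2, ∑ z : Fin 2, (-1 : ℝ) ^ ((x : ℕ) * (z : ℕ)) *
          ∑ a : Fin 2, ∑ b : Fin 2, ∑ c : Fin 2,
            (-1 : ℝ) ^ ((a : ℕ) + (c : ℕ)) * p a b c x 0 z) = t := by
  refine ⟨fun a b c x y z =>
    (1 + (s / 4) * (-1 : ℝ) ^ ((a : ℕ) + (b : ℕ) + (x : ℕ) * (y : ℕ))
       + (t / 4) * (-1 : ℝ) ^ ((a : ℕ) + (c : ℕ) + (x : ℕ) * (z : ℕ))) / 8,
    fun a b c x y z => chsh_aux_nonneg s t hst _ _, ?_, ?_, ?_, ?_, ?_, ?_⟩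
  · intro x y z
    simp only [Fin.sum_univ_two, Fin.val_zero, Fin.val_one, pow_add, pow_zero, pow_one]
    ring
  · intro b c x x' y z
    simp only [Fin.sum_univ_two, Fin.val_zero, Fin.val_one, pow_add, pow_zero, pow_one]
    ring
  · intro a c x y y' z
    simp only [Fin.sum_univ_two, Fin.val_zero, Fin.val_one, pow_add, pow_zero, pow_one]
    ring
  · intro a b x y z z'
    simp only [Fin.sum_univ_two, Fin.val_zero, Fin.val_one, pow_add, pow_zero, pow_one]
    ring
  · simp only [Fin.sum_univ_two, Fin.val_zero, Fin.val_one, pow_add, pow_zero, pow_one,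
      Nat.mul_zero, Nat.zero_mul, Nat.mul_one, Nat.one_mul]
    ring
  · simp only [Fin.sum_univ_two, Fin.val_zero, Fin.val_one, pow_add, pow_zero, pow_one,
      Nat.mul_zero, Nat.zero_mul, Nat.mul_one, Nat.one_mul]
    ring
end

section
/- Let n ≥ 3 be an odd integer. Let p : Fin 2 → Fin 2 → Fin 2 → ZMod n → ZMod n → ZMod n → ℝ, written p a b c i j k, be a tripartite no-signaling probability distribution with inputs in ZMod n and binary outputs: p a b c i j k ≥ 0 for all arguments; Σ_{a,b,c} p a b c i j k = 1 for all i,j,k; Σ_a p a b c i j k is independent of i, Σ_b p a b c i j k is independent of j, and Σ_c p a b c i j k is independent of k. Then the winning probability of p in the extended odd cycle game G'_OC, namely (1/(2n)) Σ_{q ∈ ZMod n} ( Σ_{a,b,c : a=b=c} p a b c q q q + Σ_{a,b,c : a≠b, b=c} p a b c q (q+1) (q+1) ), is at most 1 − 1/(2n). -/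
open Finset

private def dab {n : ℕ} (p : Fin 2 → Fin 2 → Fin 2 → ZMod n → ZMod n → ZMod n → ℝ)
    (i j k : ZMod n) : ℝ :=
  ∑ a : Fin 2, ∑ b : Fin 2, ∑ c : Fin 2, if a ≠ b then p a b c i j k else 0

private def dbc {n : ℕ} (p : Fin 2 → Fin 2 → Fin 2 → ZMod n → ZMod n → ZMod n → ℝ)
    (i j k : ZMod n) : ℝ :=
  ∑ a : Fin 2, ∑ b : Fin 2, ∑ c : Fin 2, if b ≠ c then p a b c i j k else 0

private def dac {n : ℕ} (p : Fin 2 → Fin 2 → Fin 2 → ZMod n → ZMod n → ZMod n → ℝ)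
    (i j k : ZMod n) : ℝ :=
  ∑ a : Fin 2, ∑ b : Fin 2, ∑ c : Fin 2, if a ≠ c then p a b c i j k else 0

private def w1f {n : ℕ} (p : Fin 2 → Fin 2 → Fin 2 → ZMod n → ZMod n → ZMod n → ℝ)
    (q : ZMod n) : ℝ :=
  ∑ a : Fin 2, ∑ b : Fin 2, ∑ c : Fin 2, if a = b ∧ b = c then p a b c q q q else 0

private def w2f {n : ℕ} (p : Fin 2 → Fin 2 → Fin 2 → ZMod n → ZMod n → ZMod n → ℝ)
    (q : ZMod n) : ℝ :=
  ∑ a : Fin 2, ∑ b : Fin 2, ∑ c : Fin 2,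
    if a ≠ b ∧ b = c then p a b c q (q + 1) (q + 1) else 0

section aux
variable {n : ℕ} (p : Fin 2 → Fin 2 → Fin 2 → ZMod n → ZMod n → ZMod n → ℝ)

/-- triangle: Pr[a≠b] ≤ Pr[b≠c] + Pr[a≠c] within one run. -/
private lemma tri_ab (hpos : ∀ a b c i j k, 0 ≤ p a b c i j k) (i j k : ZMod n) :
    dab p i j k ≤ dbc p i j k + dac p i j k := by
  simp only [dab, dbc, dac, Fin.sum_univ_two]
  norm_num
  linarith [hpos 0 0 0 i j k, hpos 0 0 1 i j k, hpos 0 1 0 i j k, hpos 0 1 1 i j k,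
    hpos 1 0 0 i j k, hpos 1 0 1 i j k, hpos 1 1 0 i j k, hpos 1 1 1 i j k]

/-- triangle: Pr[b≠c] ≤ Pr[a≠b] + Pr[a≠c] within one run. -/
private lemma tri_bc (hpos : ∀ a b c i j k, 0 ≤ p a b c i j k) (i j k : ZMod n) :
    dbc p i j k ≤ dab p i j k + dac p i j k := by
  simp only [dab, dbc, dac, Fin.sum_univ_two]
  norm_num
  linarith [hpos 0 0 0 i j k, hpos 0 0 1 i j k, hpos 0 1 0 i j k, hpos 0 1 1 i j k,
    hpos 1 0 0 i j k, hpos 1 0 1 i j k, hpos 1 1 0 i j k, hpos 1 1 1 i j k]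

/-- triangle: Pr[a≠c] ≤ Pr[a≠b] + Pr[b≠c] within one run. -/
private lemma tri_ac (hpos : ∀ a b c i j k, 0 ≤ p a b c i j k) (i j k : ZMod n) :
    dac p i j k ≤ dab p i j k + dbc p i j k := by
  simp only [dab, dbc, dac, Fin.sum_univ_two]
  norm_num
  linarith [hpos 0 0 0 i j k, hpos 0 0 1 i j k, hpos 0 1 0 i j k, hpos 0 1 1 i j k,
    hpos 1 0 0 i j k, hpos 1 0 1 i j k, hpos 1 1 0 i j k, hpos 1 1 1 i j k]

/-- perimeter: Pr[a≠b] + Pr[b≠c] + Pr[a≠c] ≤ 2 within one run. -/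
private lemma perim (hpos : ∀ a b c i j k, 0 ≤ p a b c i j k)
    (hnorm : ∀ i j k, ∑ a : Fin 2, ∑ b : Fin 2, ∑ c : Fin 2, p a b c i j k = 1)
    (i j k : ZMod n) :
    dab p i j k + dbc p i j k + dac p i j k ≤ 2 := by
  have h := hnorm i j k
  simp only [Fin.sum_univ_two] at h
  simp only [dab, dbc, dac, Fin.sum_univ_two]
  norm_num
  linarith [hpos 0 0 0 i j k, hpos 0 0 1 i j k, hpos 0 1 0 i j k, hpos 0 1 1 i j k,
    hpos 1 0 0 i j k, hpos 1 0 1 i j k, hpos 1 1 0 i j k, hpos 1 1 1 i j k]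

private lemma w1_add_dab (hpos : ∀ a b c i j k, 0 ≤ p a b c i j k)
    (hnorm : ∀ i j k, ∑ a : Fin 2, ∑ b : Fin 2, ∑ c : Fin 2, p a b c i j k = 1)
    (q : ZMod n) : w1f p q + dab p q q q ≤ 1 := by
  have h := hnorm q q q
  simp only [Fin.sum_univ_two] at h
  simp only [w1f, dab, Fin.sum_univ_two]
  norm_num
  linarith [hpos 0 0 0 q q q, hpos 0 0 1 q q q, hpos 0 1 0 q q q, hpos 0 1 1 q q q,
    hpos 1 0 0 q q q, hpos 1 0 1 q q q, hpos 1 1 0 q q q, hpos 1 1 1 q q q]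

private lemma w1_add_dac (hpos : ∀ a b c i j k, 0 ≤ p a b c i j k)
    (hnorm : ∀ i j k, ∑ a : Fin 2, ∑ b : Fin 2, ∑ c : Fin 2, p a b c i j k = 1)
    (q : ZMod n) : w1f p q + dac p q q q ≤ 1 := by
  have h := hnorm q q q
  simp only [Fin.sum_univ_two] at h
  simp only [w1f, dac, Fin.sum_univ_two]
  norm_num
  linarith [hpos 0 0 0 q q q, hpos 0 0 1 q q q, hpos 0 1 0 q q q, hpos 0 1 1 q q q,
    hpos 1 0 0 q q q, hpos 1 0 1 q q q, hpos 1 1 0 q q q, hpos 1 1 1 q q q]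

private lemma w2_le_dab (hpos : ∀ a b c i j k, 0 ≤ p a b c i j k) (q : ZMod n) :
    w2f p q ≤ dab p q (q + 1) (q + 1) := by
  simp only [w2f, dab, Fin.sum_univ_two]
  norm_num
  linarith [hpos 0 0 0 q (q+1) (q+1), hpos 0 0 1 q (q+1) (q+1), hpos 0 1 0 q (q+1) (q+1),
    hpos 0 1 1 q (q+1) (q+1), hpos 1 0 0 q (q+1) (q+1), hpos 1 0 1 q (q+1) (q+1),
    hpos 1 1 0 q (q+1) (q+1), hpos 1 1 1 q (q+1) (q+1)]

private lemma w2_le_dac (hpos : ∀ a b c i j k, 0 ≤ p a b c i j k) (q : ZMod n) :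
    w2f p q ≤ dac p q (q + 1) (q + 1) := by
  simp only [w2f, dac, Fin.sum_univ_two]
  norm_num
  linarith [hpos 0 0 0 q (q+1) (q+1), hpos 0 0 1 q (q+1) (q+1), hpos 0 1 0 q (q+1) (q+1),
    hpos 0 1 1 q (q+1) (q+1), hpos 1 0 0 q (q+1) (q+1), hpos 1 0 1 q (q+1) (q+1),
    hpos 1 1 0 q (q+1) (q+1), hpos 1 1 1 q (q+1) (q+1)]

/-- no-signaling: Pr[a≠b | i,j] does not depend on k. -/
private lemma dab_ns (hnsC : ∀ a b i j k k',
      ∑ c : Fin 2, p a b c i j k = ∑ c : Fin 2, p a b c i j k')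
    (i j k k' : ZMod n) : dab p i j k = dab p i j k' := by
  have h1 := hnsC 0 1 i j k k'
  have h2 := hnsC 1 0 i j k k'
  simp only [Fin.sum_univ_two] at h1 h2
  simp only [dab, Fin.sum_univ_two]
  norm_num
  linarith

/-- no-signaling: Pr[b≠c | j,k] does not depend on i. -/
private lemma dbc_ns (hnsA : ∀ b c i i' j k,
      ∑ a : Fin 2, p a b c i j k = ∑ a : Fin 2, p a b c i' j k)
    (i i' j k : ZMod n) : dbc p i j k = dbc p i' j k := by
  have h1 := hnsA 0 1 i i' j k
  have h2 := hnsA 1 0 i i' j k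
  simp only [Fin.sum_univ_two] at h1 h2
  simp only [dbc, Fin.sum_univ_two]
  norm_num
  linarith

/-- no-signaling: Pr[a≠c | i,k] does not depend on j. -/
private lemma dac_ns (hnsB : ∀ a c i j j' k,
      ∑ b : Fin 2, p a b c i j k = ∑ b : Fin 2, p a b c i j' k)
    (i j j' k : ZMod n) : dac p i j k = dac p i j' k := by
  have h1 := hnsB 0 1 i j j' k
  have h2 := hnsB 1 0 i j j' k
  simp only [Fin.sum_univ_two] at h1 h2
  simp only [dac, Fin.sum_univ_two]
  norm_num
  linarith

end aux

/-- **Upper bound half of Theorem 3:** `ω_ns(G'_OC) ≤ 1 − 1/(2n)`. Every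
tripartite no-signaling distribution with inputs in `ZMod n` and binary outputs
wins the extended odd cycle game `G'_OC` (for odd `n ≥ 3`) with probability at
most `1 − 1/(2n)`. -/
theorem oddcycle_ext_ns_upper_bound
    (n : ℕ) [NeZero n] (hn : 3 ≤ n) (hodd : Odd n)
    (p : Fin 2 → Fin 2 → Fin 2 → ZMod n → ZMod n → ZMod n → ℝ)
    (hpos : ∀ a b c i j k, 0 ≤ p a b c i j k)
    (hnorm : ∀ i j k, ∑ a : Fin 2, ∑ b : Fin 2, ∑ c : Fin 2, p a b c i j k = 1)
    (hnsA : ∀ b c i i' j k, ∑ a : Fin 2, p a b c i j k = ∑ a : Fin 2, p a b c i' j k)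
    (hnsB : ∀ a c i j j' k, ∑ b : Fin 2, p a b c i j k = ∑ b : Fin 2, p a b c i j' k)
    (hnsC : ∀ a b i j k k', ∑ c : Fin 2, p a b c i j k = ∑ c : Fin 2, p a b c i j k') :
    (1 / (2 * (n : ℝ))) * ∑ q : ZMod n,
        ((∑ a : Fin 2, ∑ b : Fin 2, ∑ c : Fin 2,
            if a = b ∧ b = c then p a b c q q q else 0) +
          (∑ a : Fin 2, ∑ b : Fin 2, ∑ c : Fin 2,
            if a ≠ b ∧ b = c then p a b c q (q + 1) (q + 1) else 0)) ≤
      1 - 1 / (2 * (n : ℝ)) := by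
  -- abbreviations: γ s = Pr[b ≠ c | j = 0, k = s], ξ t = Pr[a ≠ b | i = t, j = 0]
  set γ : ℕ → ℝ := fun s => dbc p 0 0 ((s : ℕ) : ZMod n) with hγ
  set ξ : ℕ → ℝ := fun t => dab p ((t : ℕ) : ZMod n) 0 0 with hξ
  set L : ℕ → ℝ := fun t =>
    (1 - w1f p ((t : ℕ) : ZMod n)) + (1 - w2f p ((t : ℕ) : ZMod n)) with hL
  -- F0 : |ξ t − γ t| ≤ 1 − w1 t
  have F0a : ∀ t : ℕ, ξ t ≤ γ t + (1 - w1f p ((t : ℕ) : ZMod n)) := by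
    intro t
    have h1 : dac p ((t : ℕ) : ZMod n) 0 ((t : ℕ) : ZMod n)
        = dac p ((t : ℕ) : ZMod n) ((t : ℕ) : ZMod n) ((t : ℕ) : ZMod n) :=
      dac_ns p hnsB _ 0 _ _
    have h2 := w1_add_dac p hpos hnorm ((t : ℕ) : ZMod n)
    have h3 := tri_ab p hpos ((t : ℕ) : ZMod n) 0 ((t : ℕ) : ZMod n)
    have h4 : dab p ((t : ℕ) : ZMod n) 0 ((t : ℕ) : ZMod n)
        = dab p ((t : ℕ) : ZMod n) 0 0 := dab_ns p hnsC _ 0 _ 0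
    have h5 : dbc p ((t : ℕ) : ZMod n) 0 ((t : ℕ) : ZMod n)
        = dbc p 0 0 ((t : ℕ) : ZMod n) := dbc_ns p hnsA _ 0 0 _
    simp only [hγ, hξ]
    linarith
  have F0b : ∀ t : ℕ, γ t ≤ ξ t + (1 - w1f p ((t : ℕ) : ZMod n)) := by
    intro t
    have h1 : dac p ((t : ℕ) : ZMod n) 0 ((t : ℕ) : ZMod n)
        = dac p ((t : ℕ) : ZMod n) ((t : ℕ) : ZMod n) ((t : ℕ) : ZMod n) :=
      dac_ns p hnsB _ 0 _ _
    have h2 := w1_add_dac p hpos hnorm ((t : ℕ) : ZMod n)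
    have h3 := tri_bc p hpos ((t : ℕ) : ZMod n) 0 ((t : ℕ) : ZMod n)
    have h4 : dab p ((t : ℕ) : ZMod n) 0 ((t : ℕ) : ZMod n)
        = dab p ((t : ℕ) : ZMod n) 0 0 := dab_ns p hnsC _ 0 _ 0
    have h5 : dbc p ((t : ℕ) : ZMod n) 0 ((t : ℕ) : ZMod n)
        = dbc p 0 0 ((t : ℕ) : ZMod n) := dbc_ns p hnsA _ 0 0 _
    simp only [hγ, hξ]
    linarith
  -- F1 : |γ (t+1) + ξ t − 1| ≤ 1 − w2 t
  have cast_succ : ∀ t : ℕ, (((t + 1 : ℕ)) : ZMod n) = ((t : ℕ) : ZMod n) + 1 := by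
    intro t; push_cast; ring
  have F1a : ∀ t : ℕ, 1 - (1 - w2f p ((t : ℕ) : ZMod n)) - ξ t ≤ γ (t + 1) := by
    intro t
    have h1 : dac p ((t : ℕ) : ZMod n) 0 (((t : ℕ) : ZMod n) + 1)
        = dac p ((t : ℕ) : ZMod n) (((t : ℕ) : ZMod n) + 1) (((t : ℕ) : ZMod n) + 1) :=
      dac_ns p hnsB _ 0 _ _
    have h2 := w2_le_dac p hpos ((t : ℕ) : ZMod n)
    have h3 := tri_ac p hpos ((t : ℕ) : ZMod n) 0 (((t : ℕ) : ZMod n) + 1)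
    have h4 : dab p ((t : ℕ) : ZMod n) 0 (((t : ℕ) : ZMod n) + 1)
        = dab p ((t : ℕ) : ZMod n) 0 0 := dab_ns p hnsC _ 0 _ 0
    have h5 : dbc p ((t : ℕ) : ZMod n) 0 (((t : ℕ) : ZMod n) + 1)
        = dbc p 0 0 (((t : ℕ) : ZMod n) + 1) := dbc_ns p hnsA _ 0 0 _
    simp only [hγ, hξ, cast_succ t]
    linarith
  have F1b : ∀ t : ℕ, γ (t + 1) ≤ 1 + (1 - w2f p ((t : ℕ) : ZMod n)) - ξ t := by
    intro t
    have h1 : dac p ((t : ℕ) : ZMod n) 0 (((t : ℕ) : ZMod n) + 1)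
        = dac p ((t : ℕ) : ZMod n) (((t : ℕ) : ZMod n) + 1) (((t : ℕ) : ZMod n) + 1) :=
      dac_ns p hnsB _ 0 _ _
    have h2 := w2_le_dac p hpos ((t : ℕ) : ZMod n)
    have h3 := perim p hpos hnorm ((t : ℕ) : ZMod n) 0 (((t : ℕ) : ZMod n) + 1)
    have h4 : dab p ((t : ℕ) : ZMod n) 0 (((t : ℕ) : ZMod n) + 1)
        = dab p ((t : ℕ) : ZMod n) 0 0 := dab_ns p hnsC _ 0 _ 0
    have h5 : dbc p ((t : ℕ) : ZMod n) 0 (((t : ℕ) : ZMod n) + 1)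
        = dbc p 0 0 (((t : ℕ) : ZMod n) + 1) := dbc_ns p hnsA _ 0 0 _
    simp only [hγ, hξ, cast_succ t]
    linarith
  -- F2 : ξ 0 ≤ 1 − w1 0
  have F2 : ξ 0 ≤ 1 - w1f p ((0 : ℕ) : ZMod n) := by
    have h1 := w1_add_dab p hpos hnorm ((0 : ℕ) : ZMod n)
    have h2 : dab p ((0 : ℕ) : ZMod n) ((0 : ℕ) : ZMod n) ((0 : ℕ) : ZMod n)
        = dab p ((0 : ℕ) : ZMod n) 0 0 := by norm_num
    simp only [hξ]
    rw [← h2]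
    linarith
  -- main induction: alternating bound on γ
  have key : ∀ s : ℕ, 1 ≤ s →
      (Even s → γ s ≤ ∑ t ∈ Finset.range s, L t) ∧
      (¬Even s → 1 - γ s ≤ ∑ t ∈ Finset.range s, L t) := by
    intro s hs
    induction s, hs using Nat.le_induction with
    | base =>
      constructor
      · intro h; exact absurd h Nat.not_even_one
      · intro _
        have h1 := F1a 0
        have h2 := F2
        rw [Finset.sum_range_one]
        simp only [hL]
        norm_num at h1 h2 ⊢
        linarith
    | succ s hs IH =>
      have hsum : ∑ t ∈ Finset.range (s + 1), L t
          = (∑ t ∈ Finset.range s, L t) + L s := Finset.sum_range_succ L s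
      constructor
      · intro hev
        have hodds : ¬Even s := by rwa [Nat.even_add_one] at hev
        have hIH := IH.2 hodds
        have h1 := F1b s
        have h2 := F0b s
        rw [hsum]
        simp only [hL]
        linarith
      · intro hod
        have hevs : Even s := by rwa [Nat.even_add_one, not_not] at hod
        have hIH := IH.1 hevs
        have h1 := F1a s
        have h2 := F0a s
        rw [hsum]
        simp only [hL]
        linarith
  -- wrap-around step at q = n − 1
  have hnn : n - 1 + 1 = n := by omega
  have hwrap : (((n - 1 : ℕ)) : ZMod n) + 1 = 0 := by
    have h1 : (((n - 1 : ℕ)) : ZMod n) + 1 = (((n - 1 + 1 : ℕ)) : ZMod n) := by push_cast; ring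
    rw [h1, hnn, ZMod.natCast_self]
  have F4 : 1 - (1 - w2f p (((n - 1 : ℕ)) : ZMod n))
      ≤ γ (n - 1) + (1 - w1f p (((n - 1 : ℕ)) : ZMod n)) := by
    have h2 := w2_le_dab p hpos (((n - 1 : ℕ)) : ZMod n)
    rw [hwrap] at h2
    have h4 : dab p (((n - 1 : ℕ)) : ZMod n) 0 0
        = dab p (((n - 1 : ℕ)) : ZMod n) 0 (((n - 1 : ℕ)) : ZMod n) :=
      dab_ns p hnsC _ 0 0 _
    have h3 := tri_ab p hpos (((n - 1 : ℕ)) : ZMod n) 0 (((n - 1 : ℕ)) : ZMod n)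
    have h5 : dbc p (((n - 1 : ℕ)) : ZMod n) 0 (((n - 1 : ℕ)) : ZMod n)
        = dbc p 0 0 (((n - 1 : ℕ)) : ZMod n) := dbc_ns p hnsA _ 0 0 _
    have h1 : dac p (((n - 1 : ℕ)) : ZMod n) 0 (((n - 1 : ℕ)) : ZMod n)
        = dac p (((n - 1 : ℕ)) : ZMod n) (((n - 1 : ℕ)) : ZMod n) (((n - 1 : ℕ)) : ZMod n) :=
      dac_ns p hnsB _ 0 _ _
    have h6 := w1_add_dac p hpos hnorm (((n - 1 : ℕ)) : ZMod n)
    simp only [hγ]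
    linarith
  have hev : Even (n - 1) := Nat.Odd.sub_odd hodd odd_one
  have h7 := (key (n - 1) (by omega)).1 hev
  -- 1 ≤ ∑_{t < n} L t
  have main : (1 : ℝ) ≤ ∑ t ∈ Finset.range n, L t := by
    have hsum : ∑ t ∈ Finset.range n, L t
        = (∑ t ∈ Finset.range (n - 1), L t) + L (n - 1) := by
      conv_lhs => rw [← hnn]
      exact Finset.sum_range_succ L (n - 1)
    rw [hsum]
    have hLn : L (n - 1)
        = (1 - w1f p (((n - 1 : ℕ)) : ZMod n)) + (1 - w2f p (((n - 1 : ℕ)) : ZMod n)) := by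
      simp only [hL]
    rw [hLn]
    linarith
  -- convert to a sum over ZMod n
  have hbij : ∑ t ∈ Finset.range n, (w1f p ((t : ℕ) : ZMod n) + w2f p ((t : ℕ) : ZMod n))
      = ∑ q : ZMod n, (w1f p q + w2f p q) := by
    refine Finset.sum_nbij' (fun t => ((t : ℕ) : ZMod n)) (fun q => q.val) ?_ ?_ ?_ ?_ ?_
    · intro a _; exact Finset.mem_univ _
    · intro a _; exact Finset.mem_range.mpr (ZMod.val_lt a)
    · intro a ha; exact ZMod.val_cast_of_lt (Finset.mem_range.mp ha)
    · intro a _; exact ZMod.natCast_rightInverse a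
    · intro a _; rfl
  have hEL : ∑ t ∈ Finset.range n, L t
      = 2 * (n : ℝ) - ∑ t ∈ Finset.range n, (w1f p ((t : ℕ) : ZMod n) + w2f p ((t : ℕ) : ZMod n)) := by
    have h1 : ∀ t ∈ Finset.range n,
        L t = 2 - (w1f p ((t : ℕ) : ZMod n) + w2f p ((t : ℕ) : ZMod n)) := by
      intro t _; simp only [hL]; ring
    rw [Finset.sum_congr rfl h1, Finset.sum_sub_distrib, Finset.sum_const, Finset.card_range]
    ring
  have hSle : ∑ q : ZMod n, (w1f p q + w2f p q) ≤ 2 * (n : ℝ) - 1 := by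
    rw [← hbij]
    linarith [main, hEL]
  -- final arithmetic
  have hgoal_eq : ∑ q : ZMod n,
        ((∑ a : Fin 2, ∑ b : Fin 2, ∑ c : Fin 2,
            if a = b ∧ b = c then p a b c q q q else 0) +
          (∑ a : Fin 2, ∑ b : Fin 2, ∑ c : Fin 2,
            if a ≠ b ∧ b = c then p a b c q (q + 1) (q + 1) else 0))
      = ∑ q : ZMod n, (w1f p q + w2f p q) := rfl
  rw [hgoal_eq]
  have hn0 : (0 : ℝ) < 2 * (n : ℝ) := by
    have : (0 : ℝ) < (n : ℝ) := by exact_mod_cast Nat.pos_of_ne_zero (NeZero.ne n)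
    linarith
  calc (1 / (2 * (n : ℝ))) * ∑ q : ZMod n, (w1f p q + w2f p q)
      ≤ (1 / (2 * (n : ℝ))) * (2 * (n : ℝ) - 1) := by
        apply mul_le_mul_of_nonneg_left hSle
        positivity
    _ = 1 - 1 / (2 * (n : ℝ)) := by
        field_simp
end

section
/- Let n ≥ 3 be an odd integer. There exist functions f, g, h : ZMod n → Fin 2 (a deterministic strategy for the three players in the extended odd cycle game G'_OC) whose winning probability (1/(2n)) Σ_{q ∈ ZMod n} ( [f(q) = g(q) and g(q) = h(q)] + [f(q) ≠ g(q+1) and g(q+1) = h(q+1)] ) equals exactly 1 − 1/(2n). Consequently, combined with the no-signaling upper bound, ω_c(G'_OC) = ω_q(G'_OC) = ω_ns(G'_OC) = 1 − 1/(2n). -/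
open Finset

/-- **Lower bound half of Theorem 3:** for odd `n ≥ 3` there is a deterministic
strategy `(f, g, h)` for the three players in the extended odd cycle game
`G'_OC` that wins with probability exactly `1 − 1/(2n)`. -/
theorem oddcycle_ext_classical_lower_bound
    (n : ℕ) [NeZero n] (hn : 3 ≤ n) (hodd : Odd n) :
    ∃ f g h : ZMod n → Fin 2,
      (1 / (2 * (n : ℝ))) * ∑ q : ZMod n,
          ((if f q = g q ∧ g q = h q then (1 : ℝ) else 0) +
            (if f q ≠ g (q + 1) ∧ g (q + 1) = h (q + 1) then (1 : ℝ) else 0)) =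
        1 - 1 / (2 * (n : ℝ)) := by
  have hnpos : 0 < n := by omega
  haveI : Fact (1 < n) := ⟨by omega⟩
  have hneg1 : (-1 : ZMod n).val = n - 1 := by
    have hcast : ((n - 1 : ℕ) : ZMod n) = -1 := by
      rw [Nat.cast_sub (by omega), ZMod.natCast_self, Nat.cast_one, zero_sub]
    rw [← hcast, ZMod.val_cast_of_lt (by omega)]
  set f : ZMod n → Fin 2 := fun q => ⟨q.val % 2, Nat.mod_lt _ (by norm_num)⟩ with hf
  refine ⟨f, f, f, ?_⟩
  have key : ∀ q : ZMod n,
      ((if f q = f q ∧ f q = f q then (1 : ℝ) else 0) +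
        (if f q ≠ f (q + 1) ∧ f (q + 1) = f (q + 1) then (1 : ℝ) else 0))
      = 2 - (if q = -1 then (1 : ℝ) else 0) := by
    intro q
    rw [if_pos ⟨rfl, rfl⟩]
    by_cases hq : q = -1
    · subst hq
      rw [if_pos rfl, if_neg]
      · ring
      rintro ⟨h1, -⟩
      apply h1
      simp only [hf, neg_add_cancel]
      have h1 := hneg1
      have h0 : (0 : ZMod n).val = 0 := ZMod.val_zero
      ext
      simp only [h1, h0]
      obtain ⟨k, hk⟩ := hodd
      omega
    · rw [if_neg hq, if_pos]
      · ring
      constructor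
      · have hlt : q.val + 1 < n := by
          have := ZMod.val_lt q
          rcases lt_or_eq_of_le (Nat.succ_le_of_lt this) with h | h
          · exact h
          · exfalso; apply hq
            have : q.val = n - 1 := by omega
            exact ZMod.val_injective n (by rw [this, hneg1])
        have hval : (q + 1).val = q.val + 1 := by
          rw [ZMod.val_add_of_lt]
          · rw [ZMod.val_one]
          · rw [ZMod.val_one]; exact hlt
        intro h
        have := congrArg Fin.val h
        simp only [hf, hval] at this
        omega
      · rfl
  rw [Finset.sum_congr rfl (fun q _ => key q)]
  rw [Finset.sum_sub_distrib, Finset.sum_const, Finset.sum_ite_eq' Finset.univ (-1 : ZMod n)]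
  simp only [Finset.mem_univ, if_true, Finset.card_univ, ZMod.card, nsmul_eq_mul]
  have hnne : (n : ℝ) ≠ 0 := Nat.cast_ne_zero.mpr (by omega)
  field_simp
end

section
/- Let n ≥ 3 be an odd integer. For every pair of functions f, g : ZMod n → Fin 2 (a deterministic strategy for the two-player odd cycle game G_OC), the winning probability (1/(2n)) Σ_{q ∈ ZMod n} ( [f(q) = g(q)] + [f(q) ≠ g(q+1)] ) is at most 1 − 1/(2n), and this bound is attained by some pair (f, g). Hence ω_c(G_OC) = 1 − 1/(2n). -/
open Finset

/-- **Classical value of the two-player odd cycle game:**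
`ω_c(G_OC) = 1 − 1/(2n)` for odd `n ≥ 3`. Every deterministic strategy `(f, g)`
wins with probability at most `1 − 1/(2n)`, and some strategy attains this. -/
theorem oddcycle_classical_value
    (n : ℕ) [NeZero n] (hn : 3 ≤ n) (hodd : Odd n) :
    (∀ f g : ZMod n → Fin 2,
        (1 / (2 * (n : ℝ))) * ∑ q : ZMod n,
            ((if f q = g q then (1 : ℝ) else 0) +
              (if f q ≠ g (q + 1) then (1 : ℝ) else 0)) ≤
          1 - 1 / (2 * (n : ℝ))) ∧
      (∃ f g : ZMod n → Fin 2,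
        (1 / (2 * (n : ℝ))) * ∑ q : ZMod n,
            ((if f q = g q then (1 : ℝ) else 0) +
              (if f q ≠ g (q + 1) then (1 : ℝ) else 0)) =
          1 - 1 / (2 * (n : ℝ))) := by
  have hn1 : (1 : ℝ) ≤ (n : ℝ) := by exact_mod_cast (by omega : 1 ≤ n)
  have h2n : (0 : ℝ) < 2 * (n : ℝ) := by linarith
  have hcard : Fintype.card (ZMod n) = n := ZMod.card n
  constructor
  · intro f g
    -- there is a failed check
    have habs : ¬ (∀ q : ZMod n, f q = g q ∧ g (q + 1) ≠ f q) := by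
      intro hall
      have step : ∀ q : ZMod n, f (q + 1) ≠ f q := by
        intro q
        have h1 := (hall (q + 1)).1
        have h2 := (hall q).2
        rw [h1]; exact h2
      have fin2 : ∀ a b c : Fin 2, b ≠ a → c ≠ a → b = c := by decide
      have h10 : f 1 ≠ f 0 := by simpa using step 0
      have key : ∀ k : ℕ, f ((k : ZMod n)) = if Even k then f 0 else f 1 := by
        intro k
        induction k with
        | zero => simp
        | succ k ih =>
          have hc : (((k + 1 : ℕ)) : ZMod n) = (k : ZMod n) + 1 := by push_cast; ring
          by_cases hk : Even k
          · have ihe : f ((k : ZMod n)) = f 0 := by simpa [hk] using ih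
            have hne : f ((k : ZMod n) + 1) ≠ f 0 := ihe ▸ step (k : ZMod n)
            rw [hc, if_neg (by simp [Nat.even_add_one, hk])]
            exact fin2 (f 0) _ _ hne h10
          · have ihe : f ((k : ZMod n)) = f 1 := by simpa [hk] using ih
            have hne : f ((k : ZMod n) + 1) ≠ f 1 := ihe ▸ step (k : ZMod n)
            rw [hc, if_pos (by simp [Nat.even_add_one, hk])]
            exact fin2 (f 1) _ _ hne h10.symm
      have := key n
      rw [ZMod.natCast_self, if_neg (Nat.not_even_iff_odd.mpr hodd)] at this
      exact h10 this.symm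
    push_neg at habs
    obtain ⟨q0, hq0⟩ := habs
    -- pointwise bounds
    set t : ZMod n → ℝ := fun q =>
      (if f q = g q then (1 : ℝ) else 0) + (if f q ≠ g (q + 1) then (1 : ℝ) else 0) with ht
    have ht2 : ∀ q, t q ≤ 2 := by
      intro q; simp only [ht]
      split <;> split <;> norm_num
    have ht1 : t q0 ≤ 1 := by
      by_cases h : f q0 = g q0
      · have h2 := hq0 h
        simp only [ht]
        rw [if_pos h, if_neg (not_not_intro h2.symm)]
        norm_num
      · simp only [ht, if_neg h]
        split <;> norm_num
    have hsum : ∑ q : ZMod n, t q ≤ 2 * (n : ℝ) - 1 := by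
      rw [← Finset.add_sum_erase _ _ (mem_univ q0)]
      have h2 : ∑ q ∈ univ.erase q0, t q ≤ ∑ q ∈ univ.erase q0, (2 : ℝ) :=
        Finset.sum_le_sum (fun q _ => ht2 q)
      have hcard' : (univ.erase q0).card = n - 1 := by
        rw [Finset.card_erase_of_mem (mem_univ q0), Finset.card_univ, hcard]
      have hconst : ∑ q ∈ univ.erase q0, (2 : ℝ) = ((n : ℝ) - 1) * 2 := by
        rw [Finset.sum_const, hcard', nsmul_eq_mul, Nat.cast_sub (by omega)]
        push_cast; ring
      rw [hconst] at h2
      linarith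
    calc (1 / (2 * (n : ℝ))) * ∑ q : ZMod n, t q
        ≤ (1 / (2 * (n : ℝ))) * (2 * (n : ℝ) - 1) := by
          apply mul_le_mul_of_nonneg_left hsum (by positivity)
      _ = 1 - 1 / (2 * (n : ℝ)) := by field_simp
  · -- construction
    haveI : Fact (1 < n) := ⟨by omega⟩
    set f : ZMod n → Fin 2 := fun q => ⟨q.val % 2, by omega⟩ with hf
    refine ⟨f, f, ?_⟩
    have hA : ∀ q : ZMod n, (if f q = f q then (1 : ℝ) else 0) = 1 := fun q => by simp
    set q0 : ZMod n := ((n - 1 : ℕ) : ZMod n) with hq0def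
    have hq0val : q0.val = n - 1 := by
      rw [hq0def, ZMod.val_cast_of_lt (by omega)]
    have hq0succ : q0 + 1 = 0 := by
      have h' : ((n - 1 + 1 : ℕ) : ZMod n) = ((n - 1 : ℕ) : ZMod n) + 1 := by push_cast; ring
      rw [hq0def, ← h', (by omega : n - 1 + 1 = n), ZMod.natCast_self]
    have hB0 : (if f q0 ≠ f (q0 + 1) then (1 : ℝ) else 0) = 0 := by
      have hnmod : n % 2 = 1 := Nat.odd_iff.mp hodd
      have : f q0 = f (q0 + 1) := by
        rw [hq0succ]
        apply Fin.ext
        simp only [hf]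
        rw [hq0val, ZMod.val_zero]
        omega
      simp [this]
    have hB1 : ∀ q : ZMod n, q ≠ q0 → (if f q ≠ f (q + 1) then (1 : ℝ) else 0) = 1 := by
      intro q hq
      have hqval : q.val ≠ n - 1 := by
        intro h
        apply hq
        apply ZMod.val_injective
        rw [h, hq0val]
      have hlt : q.val + 1 < n := by have := ZMod.val_lt q; omega
      have hsucc : (q + 1).val = q.val + 1 := by
        rw [ZMod.val_add_of_lt]
        · rw [ZMod.val_one]
        · rw [ZMod.val_one]; exact hlt
      have : f q ≠ f (q + 1) := by
        simp only [hf, ne_eq, Fin.mk.injEq, hsucc]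
        omega
      simp [this]
    have hsum : ∑ q : ZMod n, ((if f q = f q then (1 : ℝ) else 0) +
        (if f q ≠ f (q + 1) then (1 : ℝ) else 0)) = 2 * (n : ℝ) - 1 := by
      rw [Finset.sum_add_distrib]
      have h1 : ∑ q : ZMod n, (if f q = f q then (1 : ℝ) else 0) = n := by
        simp [hA, hcard]
      have h2 : ∑ q : ZMod n, (if f q ≠ f (q + 1) then (1 : ℝ) else 0) = (n : ℝ) - 1 := by
        rw [← Finset.add_sum_erase _ _ (mem_univ q0), hB0, zero_add]
        rw [Finset.sum_congr rfl (fun q hq => hB1 q (Finset.ne_of_mem_erase hq))]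
        rw [Finset.sum_const, Finset.card_erase_of_mem (mem_univ q0), Finset.card_univ,
          hcard, nsmul_eq_mul, Nat.cast_sub (by omega)]
        push_cast; ring
      rw [h1, h2]; ring
    rw [hsum]
    field_simp
end
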